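/- arXiv:2510.20515 — 2 statements merged into one kernel-verified Lean document; each statement's English description precedes it below -/
import Mathlib

section
/- Let X be uniformly distributed on the sphere of radius r_a = r_e + r_min, conditioned on being at distance greater than r_u ≥ r_min from an observer at distance r_e from the center. Then the probability that X is visible (i.e., at distance at most r_max = √(2 r_e r_min + r_min²) from the observer) equals P_I = (r_min - (r_u² - r_min²)/(2 r_e)) / (2 r_a - (r_u² - r_min²)/(2 r_e)). -/
/-!
Since `∫ r in a..b, 2 r = b² - a²`, the integral equals `(r_max² - r_u²) / (4 r_e r_a - r_u² + r_min²)`,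
and `r_max² = 2 r_e r_min + r_min²`. Multiplying numerator and denominator of `P_I` by `2 r_e`
gives the same fraction.
-/

theorem intervalIntegral.integral_two_mul_div (a b c : ℝ) :
    ∫ r in a..b, 2 * r / c = (b ^ 2 - a ^ 2) / c := by
  rw [intervalIntegral.integral_div, intervalIntegral.integral_const_mul, integral_id]
  ring

theorem sub_div_div_sub_div {c : ℝ} (hc : c ≠ 0) (a b x : ℝ) :
    (a - x / c) / (b - x / c) = (c * a - x) / (c * b - x) := by
  have hsub : ∀ y : ℝ, y - x / c = (c * y - x) / c := fun y => by field_simp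
  rw [hsub, hsub, div_div_div_cancel_right₀ hc]

theorem visibility_probability_general
    (r_e r_min : ℝ) (he : 0 < r_e) (hm : 0 < r_min)
    (r_a : ℝ) (hra : r_a = r_e + r_min)
    (r_max : ℝ) (hrmax : r_max = Real.sqrt (2 * r_e * r_min + r_min ^ 2))
    (r_u : ℝ) :
    ∫ r in r_u..r_max, 2 * r / (4 * r_e * r_a - r_u ^ 2 + r_min ^ 2)
      = (r_min - (r_u ^ 2 - r_min ^ 2) / (2 * r_e))
        / (2 * r_a - (r_u ^ 2 - r_min ^ 2) / (2 * r_e)) := by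
  have hmax_sq : r_max ^ 2 = 2 * r_e * r_min + r_min ^ 2 := by
    rw [hrmax, Real.sq_sqrt (by positivity)]
  rw [intervalIntegral.integral_two_mul_div, sub_div_div_sub_div (by positivity), hmax_sq, hra]
  congr 1 <;> ring

/-- integrating the conditional distance density
`f(r | r_u) = 2 r / (4 r_e r_a - r_u² + r_min²)` from `r_u` to
`r_max = √(2 r_e r_min + r_min²)` gives the visibility probability
`P_I = (r_min - (r_u² - r_min²)/(2 r_e)) / (2 r_a - (r_u² - r_min²)/(2 r_e))`. -/
theorem visibility_probability
    (r_e r_min : ℝ) (he : 0 < r_e) (hm : 0 < r_min)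
    (r_a : ℝ) (hra : r_a = r_e + r_min)
    (r_max : ℝ) (hrmax : r_max = Real.sqrt (2 * r_e * r_min + r_min ^ 2))
    (r_u : ℝ) (hru1 : r_min ≤ r_u) (hru2 : r_u ≤ r_max) :
    ∫ r in r_u..r_max, 2 * r / (4 * r_e * r_a - r_u ^ 2 + r_min ^ 2)
      = (r_min - (r_u ^ 2 - r_min ^ 2) / (2 * r_e))
        / (2 * r_a - (r_u ^ 2 - r_min ^ 2) / (2 * r_e)) :=
  visibility_probability_general r_e r_min he hm r_a hra r_max hrmax r_u
end

section
/- Let H be a nonnegative random variable following Shadowed Rician fading with integer Nakagami parameter m ≥ 1 and parameters b > 0, Ω > 0; set μ = (1/(2b)) (2bm/(2bm+Ω))^m, δ = (1/(2b)) (Ω/(2bm+Ω)), β = 1/(2b). Then the complementary CDF of the power gain |H|² is P(|H|² > x) = μ Σ_{n=0}^{m-1} ((1-m)_n (-δ)^n / (n!)²) Σ_{l=0}^{n} (n!/l!) x^l e^{-(β-δ)x} (β-δ)^{-(n+1-l)} for x ≥ 0. In particular, this expression evaluated at x = 0 equals 1, i.e., μ Σ_{n=0}^{m-1} ((1-m)_n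 (-δ)^n / (n!)²) n! (β-δ)^{-(n+1)} = 1. -/
/-!
With `c = β - δ = m / (2bm + Ω) > 0` the density is a finite combination of the gamma kernels
`t ^ n * exp (-c t)`, so its tail integral is computed termwise: the derivative of the sum
`powExpTail c n` telescopes to `-t ^ n * exp (-c t)`, and the sum vanishes at infinity.
The normalisation is the binomial theorem: `(1 - m)_n (-δ) ^ n / n! = C(m - 1, n) δ ^ n`, so the
sum equals `μ (δ + c) ^ (m - 1) c ^ (-m) = μ β ^ (m - 1) c ^ (-m)`, and `μ β ^ (m - 1) = c ^ m`.
-/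

open MeasureTheory Filter Topology Real Finset

noncomputable def powExpTail (c : ℝ) (n : ℕ) (x : ℝ) : ℝ :=
  ∑ l ∈ range (n + 1),
    ((n.factorial : ℝ) / (l.factorial : ℝ)) * x ^ l * exp (-c * x) * c ^ (-(n : ℤ) - 1 + l)

lemma sum_factorial_div_mul_sub_mul_zpow {c : ℝ} (hc : c ≠ 0) (n : ℕ) (y : ℝ) :
    ∑ l ∈ range (n + 1), ((n.factorial : ℝ) / (l.factorial : ℝ))
        * (l * y ^ (l - 1) - c * y ^ l) * c ^ (-(n : ℤ) - 1 + l) = -y ^ n := by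
  set H : ℕ → ℝ := fun l => (n.factorial : ℝ) / (l.factorial : ℝ) * y ^ l * c ^ (-(n : ℤ) + l)
  have h_succ (l : ℕ) : ((n.factorial : ℝ) / ((l + 1).factorial : ℝ))
      * ((l + 1 : ℕ) * y ^ (l + 1 - 1) - c * y ^ (l + 1)) * c ^ (-(n : ℤ) - 1 + (l + 1 : ℕ))
        = H l - H (l + 1) := by
    have h1 : -(n : ℤ) - 1 + (l + 1 : ℕ) = -(n : ℤ) + l := by push_cast; ring
    have h2 : -(n : ℤ) + (l + 1 : ℕ) = -(n : ℤ) + l + 1 := by push_cast; ring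
    simp only [H, h1, h2, zpow_add_one₀ hc, Nat.factorial_succ, Nat.add_sub_cancel]
    push_cast
    field_simp
  have h_top : H n = y ^ n := by
    simp [H, (Nat.cast_ne_zero.mpr n.factorial_ne_zero : (n.factorial : ℝ) ≠ 0)]
  rw [sum_range_succ']
  simp only [h_succ]
  rw [sum_range_sub', h_top]
  simp only [H, Nat.factorial_zero, Nat.cast_one, div_one, pow_zero, mul_one, CharP.cast_eq_zero,
    add_zero, zpow_neg, zpow_natCast, zero_tsub, zero_sub, mul_neg, zpow_sub_one₀ hc, neg_mul]
  field_simp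
  ring

lemma hasDerivAt_powExpTail {c : ℝ} (hc : c ≠ 0) (n : ℕ) (y : ℝ) :
    HasDerivAt (powExpTail c n) (-(y ^ n * exp (-c * y))) y := by
  have hexp : HasDerivAt (fun y => exp (-c * y)) (exp (-c * y) * (-c)) y := by
    simpa using ((hasDerivAt_id y).const_mul (-c)).exp
  have hsum : HasDerivAt (powExpTail c n) (∑ l ∈ range (n + 1),
      ((n.factorial : ℝ) / (l.factorial : ℝ) * (l * y ^ (l - 1)) * exp (-c * y)
        + (n.factorial : ℝ) / (l.factorial : ℝ) * y ^ l * (exp (-c * y) * (-c)))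
        * c ^ (-(n : ℤ) - 1 + l)) y :=
    HasDerivAt.fun_sum fun l _ =>
      (((hasDerivAt_pow l y).const_mul _).mul hexp).mul_const _
  refine hsum.congr_deriv ?_
  rw [neg_mul_eq_neg_mul, ← sum_factorial_div_mul_sub_mul_zpow hc n y, sum_mul]
  refine sum_congr rfl fun l _ => ?_
  ring

lemma tendsto_powExpTail_atTop {c : ℝ} (hc : 0 < c) (n : ℕ) :
    Tendsto (powExpTail c n) atTop (𝓝 0) := by
  have h_term (l : ℕ) : Tendsto (fun x : ℝ => x ^ l * exp (-c * x)) atTop (𝓝 0) := by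
    simpa using tendsto_rpow_mul_exp_neg_mul_atTop_nhds_zero l c hc
  have := tendsto_finsetSum (range (n + 1)) fun l _ =>
    ((h_term l).const_mul ((n.factorial : ℝ) / (l.factorial : ℝ))).mul_const (c ^ (-(n : ℤ) - 1 + l))
  simp only [mul_zero, zero_mul, sum_const_zero] at this
  refine this.congr fun x => sum_congr rfl fun l _ => ?_
  ring

lemma pow_mul_exp_neg_isLittleO {c : ℝ} (hc : 0 < c) (n : ℕ) :
    (fun t : ℝ => t ^ n * exp (-c * t)) =o[atTop] fun t => exp (-(c / 2) * t) := by
  have := (isLittleO_pow_exp_pos_mul_atTop n (half_pos hc)).mul_isBigO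
    (Asymptotics.isBigO_refl (fun t : ℝ => exp (-c * t)) atTop)
  refine this.congr_right fun t => ?_
  rw [← exp_add]
  ring_nf

lemma integrableOn_pow_mul_exp_neg_Ioi {c : ℝ} (hc : 0 < c) (n : ℕ) (x : ℝ) :
    IntegrableOn (fun t : ℝ => t ^ n * exp (-c * t)) (Set.Ioi x) :=
  integrable_of_isBigO_exp_neg (half_pos hc) (by fun_prop) (pow_mul_exp_neg_isLittleO hc n).isBigO

lemma integral_pow_mul_exp_neg_Ioi {c : ℝ} (hc : 0 < c) (n : ℕ) (x : ℝ) :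
    ∫ t in Set.Ioi x, t ^ n * exp (-c * t) = powExpTail c n x := by
  have := integral_Ioi_of_hasDerivAt_of_tendsto' (fun y _ => hasDerivAt_powExpTail hc.ne' n y)
    (integrableOn_pow_mul_exp_neg_Ioi hc n x).neg (tendsto_powExpTail_atTop hc n)
  rw [integral_neg] at this
  linarith

lemma integral_Ioi_sum_mul_pow_mul_exp_neg {c : ℝ} (hc : 0 < c) (s : Finset ℕ) (a : ℕ → ℝ)
    (x : ℝ) :
    ∫ t in Set.Ioi x, ∑ n ∈ s, a n * (t ^ n * exp (-c * t)) = ∑ n ∈ s, a n * powExpTail c n x := by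
  rw [integral_finsetSum _ fun n _ => (integrableOn_pow_mul_exp_neg_Ioi hc n x).const_mul (a n)]
  simp only [integral_const_mul, integral_pow_mul_exp_neg_Ioi hc]

lemma ascPochhammer_eval_neg_natCast_mul_neg_pow (k n : ℕ) (δ : ℝ) :
    (ascPochhammer ℝ n).eval (-(k : ℝ)) * (-δ) ^ n / (n.factorial : ℝ) ^ 2 * n.factorial
      = k.choose n * δ ^ n := by
  rw [ascPochhammer_eval_neg_eq_descPochhammer, descPochhammer_eval_eq_descFactorial,
    Nat.descFactorial_eq_factorial_mul_choose, mul_right_comm, ← mul_pow, neg_one_mul, neg_neg]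
  have : (n.factorial : ℝ) ≠ 0 := Nat.cast_ne_zero.mpr n.factorial_ne_zero
  push_cast
  field_simp

lemma sum_choose_mul_pow_mul_zpow {c : ℝ} (hc : c ≠ 0) (k : ℕ) (δ : ℝ) :
    ∑ n ∈ range (k + 1), (k.choose n : ℝ) * δ ^ n * c ^ (-(n : ℤ) - 1)
      = (δ + c) ^ k * c ^ (-(k : ℤ) - 1) := by
  rw [add_pow, sum_mul]
  refine sum_congr rfl fun n hn => ?_
  have hnk : n ≤ k := Nat.lt_succ_iff.mp (mem_range.mp hn)
  have : -(n : ℤ) - 1 = (k - n : ℕ) + (-(k : ℤ) - 1) := by push_cast [Nat.cast_sub hnk]; ring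
  rw [this, zpow_add₀ hc, zpow_natCast]
  ring

/-- complementary CDF of the Shadowed Rician power gain with integer
Nakagami parameter `m ≥ 1`: integrating the gamma-mixture density
`f(t) = μ' Σ_{n<m} ((1-m)_n (-δ t)^n/(n!)²) e^{-(β-δ)t}` over `(x, ∞)` yields the
stated finite double sum, and the expression at `x = 0` equals `1`. -/
theorem shadowed_rician_ccdf
    (b Ωp : ℝ) (hb : 0 < b) (hΩ : 0 < Ωp) (m : ℕ) (hm : 1 ≤ m)
    (μ' δ β : ℝ)
    (hμ : μ' = (1 / (2 * b)) * (2 * b * m / (2 * b * m + Ωp)) ^ m)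
    (hδ : δ = (1 / (2 * b)) * (Ωp / (2 * b * m + Ωp)))
    (hβ : β = 1 / (2 * b))
    (f : ℝ → ℝ)
    (hf : ∀ t, f t = μ' * (∑ n ∈ Finset.range m,
      (ascPochhammer ℝ n).eval (1 - (m : ℝ)) * (-δ * t) ^ n / ((n.factorial : ℝ)) ^ 2)
        * Real.exp (-(β - δ) * t)) :
    (∀ x : ℝ, 0 ≤ x →
      ∫ t in Set.Ioi x, f t
        = μ' * ∑ n ∈ Finset.range m,
            ((ascPochhammer ℝ n).eval (1 - (m : ℝ)) * (-δ) ^ n / ((n.factorial : ℝ)) ^ 2)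
            * ∑ l ∈ Finset.range (n + 1),
                ((n.factorial : ℝ) / (l.factorial : ℝ)) * x ^ l
                  * Real.exp (-(β - δ) * x) * (β - δ) ^ (-(n : ℤ) - 1 + l)) ∧
    μ' * ∑ n ∈ Finset.range m,
        ((ascPochhammer ℝ n).eval (1 - (m : ℝ)) * (-δ) ^ n / ((n.factorial : ℝ)) ^ 2)
          * (n.factorial : ℝ) * (β - δ) ^ (-(n : ℤ) - 1) = 1 := by
  have hden : 0 < 2 * b * m + Ωp := by positivity
  have hc : β - δ = m / (2 * b * m + Ωp) := by
    rw [hβ, hδ]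
    field_simp
    ring
  have hc_pos : 0 < β - δ := by rw [hc]; positivity
  constructor
  · intro x _
    have hf_mixture : f = fun t => μ' * ∑ n ∈ range m,
        (ascPochhammer ℝ n).eval (1 - (m : ℝ)) * (-δ) ^ n / (n.factorial : ℝ) ^ 2
          * (t ^ n * exp (-(β - δ) * t)) := by
      funext t
      rw [hf, mul_assoc, sum_mul]
      congr 1
      refine sum_congr rfl fun n _ => ?_
      ring
    rw [hf_mixture, integral_const_mul, integral_Ioi_sum_mul_pow_mul_exp_neg hc_pos]
    rfl
  · obtain ⟨k, rfl⟩ : ∃ k, m = k + 1 := ⟨m - 1, by omega⟩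
    have h_one_sub : 1 - ((k + 1 : ℕ) : ℝ) = -(k : ℝ) := by push_cast; ring
    have hβ_pow : μ' * β ^ k = (β - δ) ^ (k + 1) := by
      rw [hμ, hc, hβ, mul_right_comm, ← pow_succ', ← mul_pow]
      congr 1
      field_simp
    simp only [h_one_sub, ascPochhammer_eval_neg_natCast_mul_neg_pow,
      sum_choose_mul_pow_mul_zpow hc_pos.ne', add_sub_cancel]
    rw [← mul_assoc, hβ_pow, ← zpow_natCast, ← zpow_add₀ hc_pos.ne']
    push_cast
    simp
end
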